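/- Let n ≥ 2 and S ⊆ ℤ^n. The following are equivalent: (a) S is representable by a DC system; (b) S is closed under both g(x,y) = ⌈(x+y)/2⌉ and h(x,y) = ⌊(x+y)/2⌋; (c) S = ⋈_{1≤i<j≤n} cl_{g,h}(π_{i,j}(S)), where cl_{g,h}(T) denotes the smallest superset of T ⊆ ℤ² that is closed under both g and h. -/

import Mathlib

/-- Componentwise closedness of a set of `ι`-indexed integer vectors under a
`k`-ary operation `f : ℤ^k → ℤ`. -/
def CptClosed {k : ℕ} {ι : Type*} (f : (Fin k → ℤ) → ℤ) (S : Set (ι → ℤ)) : Prop :=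
  ∀ x : Fin k → ι → ℤ, (∀ l, x l ∈ S) → (fun i => f (fun l => x l i)) ∈ S

/-- `f : ℤ³ → ℤ` is a majority operation. -/
def IsMajorityOp (f : (Fin 3 → ℤ) → ℤ) : Prop :=
  ∀ a b : ℤ, f ![a, a, b] = a ∧ f ![a, b, a] = a ∧ f ![b, a, a] = a

/-- `S` is closed under some majority operation. -/
def MajClosed {ι : Type*} (S : Set (ι → ℤ)) : Prop :=
  ∃ f : (Fin 3 → ℤ) → ℤ, IsMajorityOp f ∧ CptClosed f S

/-- The projection `π_{i,j}(x) = (x_i, x_j)`. -/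
def proj2 {n : ℕ} (i j : Fin n) (x : Fin n → ℤ) : Fin 2 → ℤ := ![x i, x j]

/-- The projection `π_{i,j}(S)`. -/
def projSet {n : ℕ} (i j : Fin n) (S : Set (Fin n → ℤ)) : Set (Fin 2 → ℤ) :=
  proj2 i j '' S

/-- The join `⋈_{1 ≤ i < j ≤ n} F i j`. -/
def joinPairs {n : ℕ} (F : Fin n → Fin n → Set (Fin 2 → ℤ)) : Set (Fin n → ℤ) :=
  {x | ∀ i j : Fin n, i < j → proj2 i j x ∈ F i j}

/-- The `f`-closure of `S`: the intersection of all `f`-closed supersets of `S`. -/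
def clOp {k m : ℕ} (f : (Fin k → ℤ) → ℤ) (S : Set (Fin m → ℤ)) : Set (Fin m → ℤ) :=
  ⋂₀ {T | S ⊆ T ∧ CptClosed f T}

/-- The directed discrete midpoint operation `μ`. -/
def muOp : (Fin 2 → ℤ) → ℤ := fun t =>
  if t 1 ≤ t 0 then ⌈((t 0 + t 1 : ℤ) : ℚ) / 2⌉ else ⌊((t 0 + t 1 : ℤ) : ℚ) / 2⌋

/-- The operation `g(x,y) = ⌈(x+y)/2⌉`. -/
def ceilAvgOp : (Fin 2 → ℤ) → ℤ := fun t => ⌈((t 0 + t 1 : ℤ) : ℚ) / 2⌉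

/-- The operation `h(x,y) = ⌊(x+y)/2⌋`. -/
def floorAvgOp : (Fin 2 → ℤ) → ℤ := fun t => ⌊((t 0 + t 1 : ℤ) : ℚ) / 2⌋

/-- The median operation on three integers. -/
def medianOp : (Fin 3 → ℤ) → ℤ := fun t =>
  max (max (min (t 0) (t 1)) (min (t 1) (t 2))) (min (t 0) (t 2))

/-- The canonical embedding `ℤ^m → ℝ^m`. -/
def toR {m : ℕ} (z : Fin m → ℤ) : Fin m → ℝ := fun l => (z l : ℝ)

/-- The integer neighborhood `N(x)` of a real vector `x`. -/
def intNbhd {m : ℕ} (x : Fin m → ℝ) : Set (Fin m → ℤ) :=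
  {z | ∀ j, |(z j : ℝ) - x j| < 1}

/-- `S` is midpoint-neighbor-closed: for all `x, y ∈ S`, `N((x+y)/2) ⊆ S`. -/
def MidpointNeighborClosed {m : ℕ} (S : Set (Fin m → ℤ)) : Prop :=
  ∀ x ∈ S, ∀ y ∈ S, ∀ z : Fin m → ℤ,
    (∀ j, |(z j : ℝ) - ((x j : ℝ) + (y j : ℝ)) / 2| < 1) → z ∈ S

/-- `S ⊆ ℤ^m` is integrally convex. -/
def IntegrallyConvex {m : ℕ} (S : Set (Fin m → ℤ)) : Prop :=
  ∀ x : Fin m → ℝ, x ∈ convexHull ℝ (toR '' S) →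
    x ∈ convexHull ℝ (toR '' (S ∩ intNbhd x))

/-- The closed convex closure of `T ⊆ ℤ^m` inside `ℝ^m`: the intersection of all
topologically closed convex sets containing `T`. -/
def closedConvexClosure {m : ℕ} (T : Set (Fin m → ℤ)) : Set (Fin m → ℝ) :=
  ⋂₀ {C : Set (Fin m → ℝ) | Convex ℝ C ∧ IsClosed C ∧ toR '' T ⊆ C}

/-- `S = cl_conv̄(S) ∩ ℤ^m`. -/
def ClosedConvexIntegral {m : ℕ} (S : Set (Fin m → ℤ)) : Prop :=
  S = {z : Fin m → ℤ | toR z ∈ closedConvexClosure S}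

/-- All entries of `A` lie in `{0, -1, +1}`. -/
def UnitMatrix {mR n : ℕ} (A : Matrix (Fin mR) (Fin n) ℤ) : Prop :=
  ∀ i j, A i j = 0 ∨ A i j = -1 ∨ A i j = 1

/-- Each row of `A` has at most `c` nonzero entries. -/
def RowSupportLE {mR n : ℕ} (A : Matrix (Fin mR) (Fin n) ℤ) (c : ℕ) : Prop :=
  ∀ i, {j | A i j ≠ 0}.ncard ≤ c

/-- `S` is representable by a UTVPI system. -/
def RepUTVPI {n : ℕ} (S : Set (Fin n → ℤ)) : Prop :=
  ∃ (mR : ℕ) (A : Matrix (Fin mR) (Fin n) ℤ) (b : Fin mR → ℝ),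
    UnitMatrix A ∧ RowSupportLE A 2 ∧
    S = {x | ∀ i, b i ≤ ((∑ j, A i j * x j : ℤ) : ℝ)}

/-- `S` is representable by an SVPI system. -/
def RepSVPI {n : ℕ} (S : Set (Fin n → ℤ)) : Prop :=
  ∃ (mR : ℕ) (A : Matrix (Fin mR) (Fin n) ℤ) (b : Fin mR → ℝ),
    UnitMatrix A ∧ RowSupportLE A 1 ∧
    S = {x | ∀ i, b i ≤ ((∑ j, A i j * x j : ℤ) : ℝ)}

/-- `S` is representable by a DC system. -/
def RepDC {n : ℕ} (S : Set (Fin n → ℤ)) : Prop :=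
  ∃ (mR : ℕ) (A : Matrix (Fin mR) (Fin n) ℤ) (b : Fin mR → ℝ),
    UnitMatrix A ∧
    (∀ i, {j | A i j = 1}.ncard ≤ 1) ∧ (∀ i, {j | A i j = -1}.ncard ≤ 1) ∧
    S = {x | ∀ i, b i ≤ ((∑ j, A i j * x j : ℤ) : ℝ)}

/-- `S` is representable by a TVPI system with possibly infinitely many inequalities. -/
def RepTVPIInf {n : ℕ} (S : Set (Fin n → ℤ)) : Prop :=
  ∃ (I : Type) (a1 a2 b : I → ℝ) (p q : I → Fin n),
    S = {x | ∀ i : I, b i ≤ a1 i * (x (p i) : ℝ) + a2 i * (x (q i) : ℝ)}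

/-- `S` is 2-decomposable: `S = ⋈_{i<j} π_{i,j}(S)`. -/
def TwoDecomposable {ι : Type*} [LinearOrder ι] (S : Set (ι → ℤ)) : Prop :=
  S = {x | ∀ i j : ι, i < j → ∃ s ∈ S, s i = x i ∧ s j = x j}

/-- The `{g,h}`-closure of `T ⊆ ℤ²`: the smallest superset of `T` closed under both
`g(x,y) = ⌈(x+y)/2⌉` and `h(x,y) = ⌊(x+y)/2⌋`. -/
def clGH (T : Set (Fin 2 → ℤ)) : Set (Fin 2 → ℤ) :=
  ⋂₀ {U | T ⊆ U ∧ CptClosed ceilAvgOp U ∧ CptClosed floorAvgOp U}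

/-!
A difference constraint `x_i - x_j ≥ b` is preserved by both discrete midpoints: the
difference of two rounded averages of integers loses at most `1/2`, and the constraint may be
taken integral.

Conversely, let `S` be closed under `g` and `h`. Averaging repeatedly towards `s` with `g`
turns any `t ∈ S` into `s + [s < t]`, so points of `S` can be pushed up one unit at a time
towards one another; this gives closure under componentwise `max`, and dually (through `-S`)
under `min`. If `z` satisfies every difference constraint valid on `S`, pushing a witness of
`x_i - x_j ≤ z_i - z_j` up or down yields `t ∈ S` with `t_i ≤ z_i` and `t_j ≥ z_j`, and the
`min` over `i` of the `max` over `j` of these points is `z`. So `S` is cut out by its finitely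
many tight difference constraints, and the pairwise projections of `S` supply exactly such
witnesses for every point of the join.
-/

open Finset

lemma ceilAvgOp_apply (t : Fin 2 → ℤ) : ceilAvgOp t = (t 0 + t 1 + 1) / 2 := by
  rw [ceilAvgOp, show (2 : ℚ) = ((2 : ℕ) : ℚ) by norm_num, Rat.ceil_intCast_div_natCast]
  omega

lemma floorAvgOp_apply (t : Fin 2 → ℤ) : floorAvgOp t = (t 0 + t 1) / 2 := by
  rw [floorAvgOp, show (2 : ℚ) = ((2 : ℕ) : ℚ) by norm_num, Rat.floor_intCast_div_natCast]
  rfl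

section Binary

variable {ι : Type*} {S : Set (ι → ℤ)}

lemma cptClosed_two_iff (f : (Fin 2 → ℤ) → ℤ) :
    CptClosed f S ↔ ∀ x ∈ S, ∀ y ∈ S, (fun i => f ![x i, y i]) ∈ S := by
  have hvec (x : Fin 2 → ι → ℤ) :
      (fun i => f fun l => x l i) = fun i => f ![x 0 i, x 1 i] := by
    funext i; congr; funext l; fin_cases l <;> rfl
  refine ⟨fun h x hx y hy => ?_, fun h x hx => ?_⟩
  · simpa [hvec] using h ![x, y] (by intro l; fin_cases l <;> assumption)
  · simpa [hvec] using h (x 0) (hx 0) (x 1) (hx 1)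

lemma cptClosed_ceilAvgOp_iff :
    CptClosed ceilAvgOp S ↔ ∀ x ∈ S, ∀ y ∈ S, (fun i => (x i + y i + 1) / 2) ∈ S := by
  simp [cptClosed_two_iff, ceilAvgOp_apply]

lemma cptClosed_floorAvgOp_iff :
    CptClosed floorAvgOp S ↔ ∀ x ∈ S, ∀ y ∈ S, (fun i => (x i + y i) / 2) ∈ S := by
  simp [cptClosed_two_iff, floorAvgOp_apply]

lemma CptClosed.neg_of_floorAvgOp (hh : CptClosed floorAvgOp S) :
    CptClosed ceilAvgOp (-S) := by
  rw [cptClosed_floorAvgOp_iff] at hh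
  rw [cptClosed_ceilAvgOp_iff]
  intro x hx y hy
  rw [Set.mem_neg]
  convert hh (-x) hx (-y) hy using 1
  funext i
  simp only [Pi.neg_apply]
  omega

end Binary

section CeilAvg

variable {ι : Type*} [Finite ι] {S : Set (ι → ℤ)}

lemma CptClosed.add_ite_lt_mem (hg : CptClosed ceilAvgOp S) {s t : ι → ℤ} (hs : s ∈ S)
    (ht : t ∈ S) :
    (fun i => s i + if s i < t i then 1 else 0) ∈ S := by
  rw [cptClosed_ceilAvgOp_iff] at hg
  set c : (ι → ℤ) → ι → ℤ := fun v i => s i + if s i < v i then 1 else 0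
  -- Averaging `v` with `s` (rounding up) stays on the same side of `s` and halves `v - c v`.
  suffices ∀ m : ℕ, ∀ v ∈ S, (∀ i, (v i - c v i).natAbs ≤ m) → c v ∈ S by
    obtain ⟨m, hm⟩ := Finite.exists_le fun i => (t i - c t i).natAbs
    exact this m t ht hm
  intro m
  induction m with
  | zero =>
    intro v hv hvc
    convert hv using 1
    funext i
    have := hvc i
    omega
  | succ m ih =>
    intro v hv hvc
    have hcw : c (fun i => (s i + v i + 1) / 2) = c v := by
      funext i; simp only [c]; split_ifs <;> omega
    rw [← hcw]
    refine ih _ (hg s hs v hv) fun i => ?_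
    have := hvc i
    rw [hcw]
    simp only [c] at this ⊢
    split_ifs at this ⊢ <;> omega

lemma CptClosed.max_min_add_mem (hg : CptClosed ceilAvgOp S) {s q : ι → ℤ} (hs : s ∈ S)
    (hq : q ∈ S) (m : ℕ) : (fun i => max (s i) (min (s i + m) (q i))) ∈ S := by
  induction m with
  | zero => convert hs using 1; funext i; simp
  | succ m ih =>
    convert hg.add_ite_lt_mem ih hq using 1
    funext i
    push_cast
    split_ifs <;> omega

lemma CptClosed.sup_mem (hg : CptClosed ceilAvgOp S) {x y : ι → ℤ} (hx : x ∈ S)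
    (hy : y ∈ S) :
    x ⊔ y ∈ S := by
  obtain ⟨m, hm⟩ := Finite.exists_le fun i => (y i - x i).toNat
  convert hg.max_min_add_mem hx hy m using 1
  funext i
  have := hm i
  simp only [Pi.sup_apply]
  omega

lemma CptClosed.exists_mem_le_ge_of_le (hg : CptClosed ceilAvgOp S) {z w q : ι → ℤ}
    (hw : w ∈ S) (hq : q ∈ S) {i j : ι} (hwz : w i - w j ≤ z i - z j) (hwi : w i ≤ z i)
    (hqj : z j ≤ q j) : ∃ t ∈ S, t i ≤ z i ∧ z j ≤ t j :=
  ⟨_, hg.max_min_add_mem hw hq (z j - w j).toNat, by omega, by omega⟩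

end CeilAvg

section Midpoint

variable {ι : Type*} [Finite ι] {S : Set (ι → ℤ)}

lemma CptClosed.inf_mem (hh : CptClosed floorAvgOp S) {x y : ι → ℤ} (hx : x ∈ S)
    (hy : y ∈ S) :
    x ⊓ y ∈ S := by
  have := hh.neg_of_floorAvgOp.sup_mem (x := -x) (y := -y) (by simpa) (by simpa)
  rwa [← neg_inf, Set.neg_mem_neg] at this

lemma exists_mem_le_ge (hg : CptClosed ceilAvgOp S) (hh : CptClosed floorAvgOp S)
    {z w p q : ι → ℤ} (hw : w ∈ S) (hp : p ∈ S) (hq : q ∈ S) {i j : ι}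
    (hwz : w i - w j ≤ z i - z j) (hpi : p i ≤ z i) (hqj : z j ≤ q j) :
    ∃ t ∈ S, t i ≤ z i ∧ z j ≤ t j := by
  by_cases hwi : w i ≤ z i
  · exact hg.exists_mem_le_ge_of_le hw hq hwz hwi hqj
  · -- Otherwise `w j > z j`, and the mirror image of the first case applies to `-S`.
    obtain ⟨t, ht, htj, hti⟩ := hh.neg_of_floorAvgOp.exists_mem_le_ge_of_le
      (z := -z) (w := -w) (q := -p) (i := j) (j := i) (by simpa) (by simpa)
      (by simp only [Pi.neg_apply]; omega) (by simp only [Pi.neg_apply]; omega)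
      (by simp only [Pi.neg_apply]; omega)
    exact ⟨-t, ht, by simp only [Pi.neg_apply] at hti ⊢; omega,
      by simp only [Pi.neg_apply] at htj ⊢; omega⟩

theorem mem_of_forall_exists_sub_le [Fintype ι] (hg : CptClosed ceilAvgOp S)
    (hh : CptClosed floorAvgOp S) {z : ι → ℤ}
    (hz : ∀ p q : Option ι, ∃ s ∈ S, p.elim 0 s - q.elim 0 s ≤ p.elim 0 z - q.elim 0 z) :
    z ∈ S := by
  rcases isEmpty_or_nonempty ι with hι | hι
  · obtain ⟨s, hs, -⟩ := hz none none
    rwa [Subsingleton.elim z s]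
  have hpair : ∀ i j, ∃ t ∈ S, t i ≤ z i ∧ z j ≤ t j := by
    intro i j
    obtain ⟨w, hw, hwz⟩ := hz (some i) (some j)
    obtain ⟨p, hp, hpz⟩ := hz (some i) none
    obtain ⟨q, hq, hqz⟩ := hz none (some j)
    simp only [Option.elim_some, Option.elim_none, sub_zero, zero_sub, neg_le_neg_iff]
      at hwz hpz hqz
    exact exists_mem_le_ge hg hh hw hp hq hwz hpz hqz
  choose t ht hti htj using hpair
  -- `z = ⨅ i, ⨆ j, t i j`: the `i`-th term is `≥ z` everywhere and `≤ z i` at `i`.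
  have hrow (i : ι) : univ.sup' univ_nonempty (t i) ∈ S :=
    sup'_mem S (fun x hx y hy => hg.sup_mem hx hy) _ _ _ fun j _ => ht i j
  convert inf'_mem S (fun x hx y hy => hh.inf_mem hx hy) univ univ_nonempty _ fun i _ => hrow i
  funext k
  simp only [Finset.inf'_apply, Finset.sup'_apply]
  refine le_antisymm (le_inf' _ _ fun i _ => le_sup'_of_le _ (mem_univ k) (htj i k))
    (inf'_le_of_le _ (mem_univ k) (sup'_le _ _ fun j _ => hti k j))

end Midpoint

section DiffSystem

variable {ι κ : Type*}

/-- The set cut out by the constraints `x (p r) - x (q r) ≥ b r`, where a missing index `none`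
contributes `0`; this covers `x_i - x_j ≥ b`, `x_i ≥ b` and `-x_j ≥ b` at once. -/
def diffSystem (p q : κ → Option ι) (b : κ → ℝ) : Set (ι → ℤ) :=
  {x | ∀ r, b r ≤ (((p r).elim 0 x - (q r).elim 0 x : ℤ) : ℝ)}

lemma cptClosed_ceilAvgOp_diffSystem (p q : κ → Option ι) (b : κ → ℝ) :
    CptClosed ceilAvgOp (diffSystem p q b) := by
  rw [cptClosed_ceilAvgOp_iff]
  intro x hx y hy r
  have helim (o : Option ι) :
      o.elim 0 (fun i => (x i + y i + 1) / 2) = (o.elim 0 x + o.elim 0 y + 1) / 2 := by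
    cases o <;> rfl
  have hxr := Int.ceil_le.2 (hx r)
  have hyr := Int.ceil_le.2 (hy r)
  exact Int.ceil_le.1 (by rw [helim, helim]; omega)

lemma cptClosed_floorAvgOp_diffSystem (p q : κ → Option ι) (b : κ → ℝ) :
    CptClosed floorAvgOp (diffSystem p q b) := by
  rw [cptClosed_floorAvgOp_iff]
  intro x hx y hy r
  have helim (o : Option ι) :
      o.elim 0 (fun i => (x i + y i) / 2) = (o.elim 0 x + o.elim 0 y) / 2 := by
    cases o <;> rfl
  have hxr := Int.ceil_le.2 (hx r)
  have hyr := Int.ceil_le.2 (hy r)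
  exact Int.ceil_le.1 (by rw [helim, helim]; omega)

lemma exists_option_iff_of_ncard_le_one [Finite ι] {P : Set ι} (hP : P.ncard ≤ 1) :
    ∃ p : Option ι, ∀ j, j ∈ P ↔ p = some j := by
  rcases (Set.ncard_le_one_iff_eq (Set.toFinite _)).1 hP with rfl | ⟨a, rfl⟩
  · exact ⟨none, by simp⟩
  · exact ⟨some a, by simp [eq_comm]⟩

variable [DecidableEq ι]

def diffRow (p q : Option ι) : ι → ℤ :=
  fun j => (if p = some j then 1 else 0) - (if q = some j then 1 else 0)

lemma sum_diffRow_mul [Fintype ι] (p q : Option ι) (x : ι → ℤ) :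
    ∑ j, diffRow p q j * x j = p.elim 0 x - q.elim 0 x := by
  simp only [diffRow, sub_mul, ite_mul, one_mul, zero_mul, Finset.sum_sub_distrib]
  cases p <;> cases q <;> simp

lemma diffRow_mem (p q : Option ι) (j : ι) :
    diffRow p q j = 0 ∨ diffRow p q j = -1 ∨ diffRow p q j = 1 := by
  unfold diffRow
  split_ifs <;> simp

lemma ncard_diffRow_eq_one_le [Finite ι] (p q : Option ι) :
    {j | diffRow p q j = 1}.ncard ≤ 1 := by
  refine (Set.ncard_le_one_iff (Set.toFinite _)).2 fun {j k} hj hk => ?_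
  simp only [diffRow, Set.mem_ofPred_eq] at hj hk
  split_ifs at hj hk <;> simp_all

lemma ncard_diffRow_eq_neg_one_le [Finite ι] (p q : Option ι) :
    {j | diffRow p q j = -1}.ncard ≤ 1 := by
  refine (Set.ncard_le_one_iff (Set.toFinite _)).2 fun {j k} hj hk => ?_
  simp only [diffRow, Set.mem_ofPred_eq] at hj hk
  split_ifs at hj hk <;> simp_all

lemma exists_eq_diffRow [Finite ι] {a : ι → ℤ} (ha : ∀ j, a j = 0 ∨ a j = -1 ∨ a j = 1)
    (hpos : {j | a j = 1}.ncard ≤ 1) (hneg : {j | a j = -1}.ncard ≤ 1) :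
    ∃ p q : Option ι, a = diffRow p q := by
  obtain ⟨p, hp⟩ := exists_option_iff_of_ncard_le_one hpos
  obtain ⟨q, hq⟩ := exists_option_iff_of_ncard_le_one hneg
  refine ⟨p, q, funext fun j => ?_⟩
  have hpj := hp j
  have hqj := hq j
  simp only [Set.mem_ofPred_eq] at hpj hqj
  unfold diffRow
  rcases ha j with h | h | h <;> split_ifs <;> simp_all

end DiffSystem

section RepDC

variable {n : ℕ} {S : Set (Fin n → ℤ)}

lemma RepDC.exists_eq_diffSystem (h : RepDC S) :
    ∃ (m : ℕ) (p q : Fin m → Option (Fin n)) (b : Fin m → ℝ), S = diffSystem p q b := by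
  obtain ⟨m, A, b, hA, hpos, hneg, rfl⟩ := h
  choose p q hpq using fun r => exists_eq_diffRow (hA r) (hpos r) (hneg r)
  refine ⟨m, p, q, b, ?_⟩
  ext x
  simp only [diffSystem, Set.mem_ofPred_eq, hpq, sum_diffRow_mul]

lemma repDC_diffSystem {κ : Type*} [Fintype κ] (p q : κ → Option (Fin n)) (b : κ → ℝ) :
    RepDC (diffSystem p q b) := by
  let e := (Fintype.equivFin κ).symm
  refine ⟨Fintype.card κ, fun r => diffRow (p (e r)) (q (e r)), fun r => b (e r),
    fun r => diffRow_mem _ _, fun r => ncard_diffRow_eq_one_le _ _,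
    fun r => ncard_diffRow_eq_neg_one_le _ _, ?_⟩
  ext x
  simp only [diffSystem, Set.mem_ofPred_eq, sum_diffRow_mul]
  exact e.surjective.forall

lemma repDC_empty : RepDC (∅ : Set (Fin n → ℤ)) := by
  convert repDC_diffSystem (κ := Unit) (fun _ => none) (fun _ => none) (fun _ => 1)
  ext x
  simp [diffSystem]

lemma Int.exists_mem_le_of_csInf_le {V : Set ℤ} (hV : V.Nonempty) {y : ℤ}
    (h : BddBelow V → sInf V ≤ y) : ∃ v ∈ V, v ≤ y := by
  by_cases hb : BddBelow V
  · exact ⟨sInf V, Int.csInf_mem hV hb, h hb⟩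
  · obtain ⟨v, hv, hvy⟩ := not_bddBelow_iff.1 hb y
    exact ⟨v, hv, hvy.le⟩

lemma repDC_of_cptClosed (hg : CptClosed ceilAvgOp S) (hh : CptClosed floorAvgOp S) :
    RepDC S := by
  classical
  rcases S.eq_empty_or_nonempty with rfl | hS
  · exact repDC_empty
  let V (r : Option (Fin n) × Option (Fin n)) : Set ℤ :=
    (fun s => r.1.elim 0 s - r.2.elim 0 s) '' S
  -- Keep the tight constraint for each of the finitely many directions bounded below on `S`.
  convert repDC_diffSystem (κ := {r // BddBelow (V r)}) (fun r => r.1.1) (fun r => r.1.2)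
    (fun r => ((sInf (V r.1) : ℤ) : ℝ))
  ext z
  simp only [diffSystem, Set.mem_ofPred_eq, Int.cast_le, Subtype.forall]
  refine ⟨fun hz r hr => csInf_le hr ⟨z, hz, rfl⟩, fun hz => ?_⟩
  refine mem_of_forall_exists_sub_le hg hh fun p q => ?_
  obtain ⟨_, ⟨s, hs, rfl⟩, hsz⟩ := Int.exists_mem_le_of_csInf_le (hS.image _) (hz (p, q))
  exact ⟨s, hs, hsz⟩

end RepDC

section Join

variable {n k : ℕ}

lemma proj2_eq_proj2_iff {i j : Fin n} {s z : Fin n → ℤ} :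
    proj2 i j s = proj2 i j z ↔ s i = z i ∧ s j = z j := by
  simp [proj2, funext_iff, Fin.forall_fin_two]

lemma CptClosed.projSet {f : (Fin k → ℤ) → ℤ} {S : Set (Fin n → ℤ)} (hf : CptClosed f S)
    (i j : Fin n) : CptClosed f (projSet i j S) := by
  intro x hx
  choose s hs hsx using hx
  refine ⟨_, hf s hs, funext fun l => ?_⟩
  fin_cases l <;> simp [proj2, ← hsx]

lemma CptClosed.joinPairs {f : (Fin k → ℤ) → ℤ}
    {F : Fin n → Fin n → Set (Fin 2 → ℤ)} (hf : ∀ i j, CptClosed f (F i j)) :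
    CptClosed f (joinPairs F) := by
  intro x hx i j hij
  convert hf i j (fun l => proj2 i j (x l)) fun l => hx l i j hij using 1
  funext l
  fin_cases l <;> rfl

lemma subset_clGH (T : Set (Fin 2 → ℤ)) : T ⊆ clGH T :=
  fun _ hx _ hU => hU.1 hx

lemma clGH_eq_self {T : Set (Fin 2 → ℤ)} (hg : CptClosed ceilAvgOp T)
    (hh : CptClosed floorAvgOp T) : clGH T = T :=
  (Set.sInter_subset_of_mem (S := {U | T ⊆ U ∧ _ ∧ _}) ⟨subset_rfl, hg, hh⟩).antisymm
    (subset_clGH T)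

lemma cptClosed_ceilAvgOp_clGH (T : Set (Fin 2 → ℤ)) : CptClosed ceilAvgOp (clGH T) :=
  fun x hx U hU => hU.2.1 x fun l => hx l U hU

lemma cptClosed_floorAvgOp_clGH (T : Set (Fin 2 → ℤ)) : CptClosed floorAvgOp (clGH T) :=
  fun x hx U hU => hU.2.2 x fun l => hx l U hU

lemma eq_joinPairs_of_cptClosed (hn : 2 ≤ n) {S : Set (Fin n → ℤ)}
    (hg : CptClosed ceilAvgOp S) (hh : CptClosed floorAvgOp S) :
    S = joinPairs fun i j => clGH (projSet i j S) := by
  simp_rw [clGH_eq_self (hg.projSet _ _) (hh.projSet _ _)]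
  refine subset_antisymm (fun x hx i j _ => ⟨x, hx, rfl⟩) fun z hz => ?_
  have hne : ∀ i j, i ≠ j → ∃ s ∈ S, s i = z i ∧ s j = z j := by
    intro i j hij
    rcases hij.lt_or_gt with h | h
    · obtain ⟨s, hs, hsz⟩ := hz i j h
      exact ⟨s, hs, proj2_eq_proj2_iff.1 hsz⟩
    · obtain ⟨s, hs, hsz⟩ := hz j i h
      exact ⟨s, hs, (proj2_eq_proj2_iff.1 hsz).symm⟩
  have hall : ∀ i j, ∃ s ∈ S, s i = z i ∧ s j = z j := by
    intro i j
    by_cases hij : i = j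
    · have : Nontrivial (Fin n) := Fin.nontrivial_iff_two_le.2 hn
      obtain ⟨k, hk⟩ := exists_ne i
      obtain ⟨s, hs, hsi, -⟩ := hne i k hk.symm
      exact ⟨s, hs, hsi, hij ▸ hsi⟩
    · exact hne i j hij
  refine mem_of_forall_exists_sub_le hg hh fun p q => ?_
  let i₀ : Fin n := ⟨0, by omega⟩
  obtain ⟨s, hs, hp, hq⟩ := hall (p.getD i₀) (q.getD i₀)
  refine ⟨s, hs, le_of_eq ?_⟩
  cases p <;> cases q <;> simp_all

end Join

/-- (a) DC representability ⇔ (b) closedness under `g` and `h`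
⇔ (c) `S = ⋈_{i<j} cl_{g,h}(π_{i,j}(S))`. -/
theorem stmt_7 {n : ℕ} (hn : 2 ≤ n) (S : Set (Fin n → ℤ)) :
    (RepDC S ↔ (CptClosed ceilAvgOp S ∧ CptClosed floorAvgOp S)) ∧
    ((CptClosed ceilAvgOp S ∧ CptClosed floorAvgOp S) ↔
      S = joinPairs (fun i j => clGH (projSet i j S))) := by
  refine ⟨⟨fun h => ?_, fun h => repDC_of_cptClosed h.1 h.2⟩,
    ⟨fun h => eq_joinPairs_of_cptClosed hn h.1 h.2, fun h => ?_⟩⟩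
  · obtain ⟨m, p, q, b, rfl⟩ := h.exists_eq_diffSystem
    exact ⟨cptClosed_ceilAvgOp_diffSystem p q b, cptClosed_floorAvgOp_diffSystem p q b⟩
  · rw [h]
    exact ⟨CptClosed.joinPairs fun i j => cptClosed_ceilAvgOp_clGH _,
      CptClosed.joinPairs fun i j => cptClosed_floorAvgOp_clGH _⟩
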